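/- Let 0 < a ≤ 1 and let r : [0,1]² → ℝ satisfy the cumulative functional equation for parameter a together with r(x,1) = 1 for all x. Then for every n ≥ 1 and every x ∈ [0,1], r(x, (g₀ᵃ)ⁿ(1)) = ∏_{k=0}^{n−1} ((1+a)/2 − a·(g₀ᵃ)ᵏ(x)), where (g₀ᵃ)ᵏ denotes the k-fold iterate of g₀ᵃ. -/
import Mathlib


open Set MeasureTheory

/-- Left branch of the anti-symmetric cusp map:
`f₀ᵃ(x) = ((a+1)/(2a))·(1 - √(1 - 8ax/(a+1)²))` on `[0,1/2]`. -/
noncomputable def f0a (a x : ℝ) : ℝ :=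
  ((a + 1) / (2 * a)) * (1 - Real.sqrt (1 - 8 * a * x / (a + 1) ^ 2))

/-- Right branch of the anti-symmetric cusp map: `f₁ᵃ(x) = 1 - f₀ᵃ(1-x)` on `[1/2,1]`. -/
noncomputable def f1a (a x : ℝ) : ℝ := 1 - f0a a (1 - x)

/-- Inverse of the left branch: `g₀ᵃ(x) = ((1+a)/2)x - (a/2)x²`. -/
noncomputable def g0a (a x : ℝ) : ℝ := ((1 + a) / 2) * x - (a / 2) * x ^ 2

/-- Inverse of the right branch: `g₁ᵃ(x) = 1/2 + ((1-a)/2)x + (a/2)x²`. -/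
noncomputable def g1a (a x : ℝ) : ℝ := 1 / 2 + ((1 - a) / 2) * x + (a / 2) * x ^ 2

/-- `r : [0,1]² → ℝ` satisfies the *cumulative functional equation* for parameter `a`:
`r(x,y) = ((1+a)/2 - ax)·r(g₀ᵃ(x), f₀ᵃ(y))` for `x ∈ [0,1]`, `y ∈ [0,1/2]`, and
`r(x,y) = (1+a)/2 - ax + ((1-a)/2 + ax)·r(g₁ᵃ(x), f₁ᵃ(y))` for `x ∈ [0,1]`, `y ∈ [1/2,1]`. -/
def CumulativeFE (a : ℝ) (r : ℝ → ℝ → ℝ) : Prop :=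
  (∀ x ∈ Set.Icc (0:ℝ) 1, ∀ y ∈ Set.Icc (0:ℝ) (1/2),
    r x y = ((1 + a) / 2 - a * x) * r (g0a a x) (f0a a y)) ∧
  (∀ x ∈ Set.Icc (0:ℝ) 1, ∀ y ∈ Set.Icc (1/2:ℝ) 1,
    r x y = (1 + a) / 2 - a * x + ((1 - a) / 2 + a * x) * r (g1a a x) (f1a a y))

/-- A solution of the cumulative functional equation with
`r(x,1) = 1` satisfies, at the successive pre-images `(g₀ᵃ)ⁿ(1)` of `1`,
`r(x, (g₀ᵃ)ⁿ(1)) = ∏_{k=0}^{n-1} ((1+a)/2 - a (g₀ᵃ)ᵏ(x))`. -/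
theorem cumulative_at_left_preimages (a : ℝ) (ha : 0 < a) (ha1 : a ≤ 1)
    (r : ℝ → ℝ → ℝ) (hr : CumulativeFE a r) (hr1 : ∀ x, r x 1 = 1) :
    ∀ n : ℕ, 1 ≤ n → ∀ x ∈ Icc (0:ℝ) 1,
      r x ((g0a a)^[n] 1) =
        ∏ k ∈ Finset.range n, ((1 + a) / 2 - a * (g0a a)^[k] x) := by
  have ha' : (0:ℝ) < 1 + a := by linarith
  -- g0a maps [0,1] into [0,1/2]
  have hg0 : ∀ x ∈ Icc (0:ℝ) 1, g0a a x ∈ Icc (0:ℝ) (1/2) := by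
    intro x hx
    obtain ⟨h0, h1⟩ := hx
    constructor
    · unfold g0a; nlinarith
    · unfold g0a
      nlinarith [mul_nonneg (sub_nonneg.2 h1) (sub_nonneg.2 (show a*x ≤ 1 by nlinarith))]
  have hg01 : ∀ x ∈ Icc (0:ℝ) 1, g0a a x ∈ Icc (0:ℝ) 1 := by
    intro x hx
    obtain ⟨h0, h1⟩ := hg0 x hx
    exact ⟨h0, by linarith⟩
  -- f0a ∘ g0a = id on [0,1]
  have hfg : ∀ x ∈ Icc (0:ℝ) 1, f0a a (g0a a x) = x := by
    intro x hx
    obtain ⟨h0, h1⟩ := hx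
    have h1' : 1 - 8 * a * (g0a a x) / (a + 1) ^ 2 = ((1 + a - 2 * a * x) / (1 + a)) ^ 2 := by
      unfold g0a
      field_simp
      ring
    have hnn : (0:ℝ) ≤ (1 + a - 2 * a * x) / (1 + a) := by
      apply div_nonneg _ ha'.le
      nlinarith
    have h2 : Real.sqrt (1 - 8 * a * (g0a a x) / (a + 1) ^ 2) = (1 + a - 2 * a * x) / (1 + a) := by
      rw [h1', Real.sqrt_sq hnn]
    unfold f0a
    rw [h2]
    field_simp
    ring
  -- iterates of g0a at 1 stay in [0,1]
  have hit : ∀ n : ℕ, (g0a a)^[n] 1 ∈ Icc (0:ℝ) 1 := by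
    intro n
    induction n with
    | zero => exact ⟨by norm_num, le_refl 1⟩
    | succ m ih =>
      rw [Function.iterate_succ_apply']
      exact hg01 _ ih
  -- main induction
  intro n
  induction n with
  | zero => intro h; omega
  | succ m ih =>
    intro _ x hx
    have hy : (g0a a)^[m+1] 1 ∈ Icc (0:ℝ) (1/2) := by
      rw [Function.iterate_succ_apply']
      exact hg0 _ (hit m)
    have hstep := hr.1 x hx _ hy
    have hfy : f0a a ((g0a a)^[m+1] 1) = (g0a a)^[m] 1 := by
      rw [Function.iterate_succ_apply']
      exact hfg _ (hit m)
    rw [hstep, hfy]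
    cases m with
    | zero =>
      simp [hr1, Finset.prod_range_one]
    | succ p =>
      rw [ih (by omega) (g0a a x) (hg01 x hx)]
      have hprod : ∏ k ∈ Finset.range (p + 2), ((1 + a) / 2 - a * (g0a a)^[k] x)
          = (∏ k ∈ Finset.range (p + 1), ((1 + a) / 2 - a * (g0a a)^[k] (g0a a x)))
            * ((1 + a) / 2 - a * x) := by
        rw [Finset.prod_range_succ']
        simp only [Function.iterate_succ_apply, Function.iterate_zero_apply]
      rw [show p + 1 + 1 = p + 2 from rfl, hprod, mul_comm]
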